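/- Let f_L be a density on I with mass ρ > 0, mean m_L = (1/ρ)∫_I w̃ f_L(w̃) dw̃ and second moment E_L = (1/ρ)∫_I w̃² f_L(w̃) dw̃, let η_L > 0, and take R ≡ 1 in the controlled leader interaction with independent zero-mean noises θ̃₁, θ̃₂ of variance σ̃² and diffusion weight D̃ : I → [0,1]. Then (η_L/(2ρ)) ∫_{I²} E[(w̃*)² + (ṽ*)² − w̃² − ṽ²] f_L(w̃) f_L(ṽ) dw̃ dṽ = ρη_L [ 2α(α−1)(E_L − m_L²) − (β/2)(2−β)(E_L + m_L²) + 2β(1−β)(ψ w_d + μ m_F) m_L + β²(ψ w_d + μ m_F)² ] + η_L σ̃² ∫_I D̃²(w̃) f_L(w̃) dw̃, where β = 4α²/(ν+4α²). -/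

import Mathlib

/-!
Since `ψ + μ = 1`, the controlled interaction is the affine map
`w̃* = a w̃ + b ṽ + β M + θ̃₁ D̃(w̃)`, `ṽ* = b w̃ + a ṽ + β M + θ̃₂ D̃(ṽ)` with `a = 1 - α - β/2`,
`b = α - β/2`, `M = ψ w_d + μ m_F`. Each noise is centred and enters only its own square, so
averaging over it just adds `σ̃² D̃²`; the remaining symmetric quadratic in `(w̃, ṽ)` integrates
against `f_L ⊗ f_L` to a polynomial in `ρ`, `ρ m_L`, `ρ E_L`. The coefficients match because
`a + b = 1 - β` and `a - b = 1 - 2α`.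
-/

open Set MeasureTheory ProbabilityTheory

section Noise

variable {Ω : Type*} [MeasurableSpace Ω] {P : Measure Ω} [IsProbabilityMeasure P] {θ θ' : Ω → ℝ}

lemma integrable_add_mul_sq (hθ : Integrable θ P) (hθ2 : Integrable (fun ω => θ ω ^ 2) P)
    (a d : ℝ) : Integrable (fun ω => (a + θ ω * d) ^ 2) P :=
  ((memLp_const a).add
    (((memLp_two_iff_integrable_sq hθ.aestronglyMeasurable).2 hθ2).mul_const d)).integrable_sq

lemma integral_add_mul_sq (hθ : Integrable θ P) (hθ2 : Integrable (fun ω => θ ω ^ 2) P)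
    (hmean : ∫ ω, θ ω ∂P = 0) (a d : ℝ) :
    ∫ ω, (a + θ ω * d) ^ 2 ∂P = a ^ 2 + (∫ ω, θ ω ^ 2 ∂P) * d ^ 2 := by
  have expand (ω : Ω) : (a + θ ω * d) ^ 2 = a ^ 2 + (2 * a * d * θ ω + d ^ 2 * θ ω ^ 2) := by
    ring
  simp only [expand]
  rw [integral_add (integrable_const _) ((hθ.const_mul _).fun_add (hθ2.const_mul _)),
    integral_add (hθ.const_mul _) (hθ2.const_mul _), integral_const_mul, integral_const_mul,
    hmean, integral_const, probReal_univ, one_smul]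
  ring

lemma integral_add_mul_sq_add_add_mul_sq_sub_sub (hθ : Integrable θ P)
    (hθ2 : Integrable (fun ω => θ ω ^ 2) P) (hmean : ∫ ω, θ ω ∂P = 0) (hθ' : Integrable θ' P)
    (hθ'2 : Integrable (fun ω => θ' ω ^ 2) P) (hmean' : ∫ ω, θ' ω ∂P = 0)
    (a b d d' c c' : ℝ) :
    ∫ ω, ((a + θ ω * d) ^ 2 + (b + θ' ω * d') ^ 2 - c - c') ∂P
      = a ^ 2 + b ^ 2 - c - c' + (∫ ω, θ ω ^ 2 ∂P) * d ^ 2 + (∫ ω, θ' ω ^ 2 ∂P) * d' ^ 2 := by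
  have hsum := (integrable_add_mul_sq hθ hθ2 a d).fun_add (integrable_add_mul_sq hθ' hθ'2 b d')
  rw [integral_sub (hsum.sub' (integrable_const _)) (integrable_const _),
    integral_sub hsum (integrable_const _), integral_add (integrable_add_mul_sq hθ hθ2 a d)
      (integrable_add_mul_sq hθ' hθ'2 b d'),
    integral_add_mul_sq hθ hθ2 hmean, integral_add_mul_sq hθ' hθ'2 hmean', integral_const,
    integral_const, probReal_univ]
  simp only [one_smul]
  ring

end Noise

lemma MeasureTheory.IntegrableOn.sq_mul_of_mapsTo_Icc {α : Type*} [MeasurableSpace α] {μ : Measure α}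
    {f g : α → ℝ} {s : Set α} (hf : IntegrableOn f s μ) (hs : MeasurableSet s)
    (hg : Measurable g) (hgs : MapsTo g s (Icc 0 1)) :
    IntegrableOn (fun x => g x ^ 2 * f x) s μ := by
  refine hf.bdd_mul (c := 1) (hg.pow_const 2).aestronglyMeasurable ?_
  filter_upwards [ae_restrict_mem hs] with x hx
  obtain ⟨hg0, hg1⟩ := hgs hx
  rw [norm_pow, Real.norm_of_nonneg hg0]
  exact pow_le_one₀ hg0 hg1

section Moments

variable {μ : Measure ℝ} {f D : ℝ → ℝ}

lemma integral_moment_combination (hf : Integrable f μ) (h1 : Integrable (fun v => v * f v) μ)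
    (h2 : Integrable (fun v => v ^ 2 * f v) μ) (hD : Integrable (fun v => D v ^ 2 * f v) μ)
    (a₀ a₁ a₂ a₃ : ℝ) :
    ∫ v, (a₀ + a₁ * v + a₂ * v ^ 2 + a₃ * D v ^ 2) * f v ∂μ
      = a₀ * ∫ v, f v ∂μ + a₁ * ∫ v, v * f v ∂μ + a₂ * ∫ v, v ^ 2 * f v ∂μ
        + a₃ * ∫ v, D v ^ 2 * f v ∂μ := by
  simp only [add_mul, mul_assoc]
  rw [integral_add (((hf.const_mul _).fun_add (h1.const_mul _)).fun_add (h2.const_mul _))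
      (hD.const_mul _), integral_add ((hf.const_mul _).fun_add (h1.const_mul _)) (h2.const_mul _),
    integral_add (hf.const_mul _) (h1.const_mul _)]
  simp only [integral_const_mul]

lemma integral_integral_symm_quadratic (hf : Integrable f μ)
    (h1 : Integrable (fun v => v * f v) μ) (h2 : Integrable (fun v => v ^ 2 * f v) μ)
    (hD : Integrable (fun v => D v ^ 2 * f v) μ) (c₂ c₁₁ c₁ c₀ cD : ℝ) :
    ∫ w, ∫ v, (c₂ * (w ^ 2 + v ^ 2) + c₁₁ * (w * v) + c₁ * (w + v) + c₀
        + cD * (D w ^ 2 + D v ^ 2)) * f w * f v ∂μ ∂μ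
      = c₀ * (∫ v, f v ∂μ) ^ 2 + 2 * c₁ * (∫ v, f v ∂μ) * (∫ v, v * f v ∂μ)
        + 2 * c₂ * (∫ v, f v ∂μ) * (∫ v, v ^ 2 * f v ∂μ) + c₁₁ * (∫ v, v * f v ∂μ) ^ 2
        + 2 * cD * (∫ v, f v ∂μ) * (∫ v, D v ^ 2 * f v ∂μ) := by
  set M₀ := ∫ v, f v ∂μ
  set M₁ := ∫ v, v * f v ∂μ
  set M₂ := ∫ v, v ^ 2 * f v ∂μ
  set MD := ∫ v, D v ^ 2 * f v ∂μ
  have inner : ∀ w, ∫ v, (c₂ * (w ^ 2 + v ^ 2) + c₁₁ * (w * v) + c₁ * (w + v) + c₀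
        + cD * (D w ^ 2 + D v ^ 2)) * f w * f v ∂μ
      = (c₀ * M₀ + c₁ * M₁ + c₂ * M₂ + cD * MD + (c₁ * M₀ + c₁₁ * M₁) * w + c₂ * M₀ * w ^ 2
          + cD * M₀ * D w ^ 2) * f w := fun w => calc
    _ = ∫ v, (f w * (c₂ * w ^ 2 + c₁ * w + c₀ + cD * D w ^ 2) + f w * (c₁₁ * w + c₁) * v
          + f w * c₂ * v ^ 2 + f w * cD * D v ^ 2) * f v ∂μ := by
      congr 1; ext v; ring
    _ = _ := by rw [integral_moment_combination hf h1 h2 hD]; ring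
  rw [integral_congr_ae (.of_forall inner), integral_moment_combination hf h1 h2 hD]
  ring

end Moments

theorem leaders_second_moment_evolution_general
    (fL : ℝ → ℝ)
    (hfLint : IntegrableOn fL (Icc (-1:ℝ) 1))
    (ρ : ℝ) (hρ : 0 < ρ)
    (hfLmass : (∫ w in Icc (-1:ℝ) 1, fL w) = ρ)
    (mL EL : ℝ)
    (hmL : mL = (1/ρ) * ∫ w in Icc (-1:ℝ) 1, w * fL w)
    (hEL : EL = (1/ρ) * ∫ w in Icc (-1:ℝ) 1, w^2 * fL w)
    (α β ψ μ wd mF ηL σt : ℝ)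
    (hψμ : ψ + μ = 1)
    (Dt : ℝ → ℝ) (hDtmeas : Measurable Dt)
    (hDt : ∀ w ∈ Icc (-1:ℝ) 1, Dt w ∈ Icc (0:ℝ) 1)
    (Ω : Type*) [MeasureSpace Ω] [IsProbabilityMeasure (volume : Measure Ω)]
    (θ₁ θ₂ : Ω → ℝ)
    (hθ₁int : Integrable θ₁) (hθ₂int : Integrable θ₂)
    (hθ₁sq : Integrable fun ω => (θ₁ ω)^2)
    (hθ₂sq : Integrable fun ω => (θ₂ ω)^2)
    (hθ₁mean : (∫ ω, θ₁ ω) = 0) (hθ₂mean : (∫ ω, θ₂ ω) = 0)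
    (hθ₁var : (∫ ω, (θ₁ ω)^2) = σt^2) (hθ₂var : (∫ ω, (θ₂ ω)^2) = σt^2) :
    (ηL/(2*ρ)) * (∫ w in Icc (-1:ℝ) 1, ∫ v in Icc (-1:ℝ) 1,
        (∫ ω, ((w + α*(v - w) + (-(β/2) * (ψ*(w + v - 2*wd) + μ*(w + v - 2*mF)))
                  + θ₁ ω * Dt w)^2
               + (v + α*(w - v) + (-(β/2) * (ψ*(w + v - 2*wd) + μ*(w + v - 2*mF)))
                  + θ₂ ω * Dt v)^2
               - w^2 - v^2))
          * fL w * fL v)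
    = ρ*ηL*(2*α*(α - 1)*(EL - mL^2)
            - (β/2)*(2 - β)*(EL + mL^2)
            + 2*β*(1 - β)*(ψ*wd + μ*mF)*mL
            + β^2*(ψ*wd + μ*mF)^2)
      + ηL*σt^2*(∫ w in Icc (-1:ℝ) 1, (Dt w)^2 * fL w) := by
  obtain rfl : μ = 1 - ψ := by linarith
  have h1 : IntegrableOn (fun v => v * fL v) (Icc (-1:ℝ) 1) :=
    hfLint.continuousOn_mul continuousOn_id isCompact_Icc
  have h2 : IntegrableOn (fun v => v ^ 2 * fL v) (Icc (-1:ℝ) 1) :=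
    hfLint.continuousOn_mul (continuousOn_id.pow 2) isCompact_Icc
  have hD : IntegrableOn (fun v => Dt v ^ 2 * fL v) (Icc (-1:ℝ) 1) :=
    hfLint.sq_mul_of_mapsTo_Icc measurableSet_Icc hDtmeas hDt
  have hM₁ : ∫ w in Icc (-1:ℝ) 1, w * fL w = ρ * mL := by rw [hmL]; field_simp
  have hM₂ : ∫ w in Icc (-1:ℝ) 1, w ^ 2 * fL w = ρ * EL := by rw [hEL]; field_simp
  calc _ = ηL / (2 * ρ) * ∫ w in Icc (-1:ℝ) 1, ∫ v in Icc (-1:ℝ) 1,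
        (((1 - α - β/2) ^ 2 + (α - β/2) ^ 2 - 1) * (w ^ 2 + v ^ 2)
          + 4 * (1 - α - β/2) * (α - β/2) * (w * v)
          + 2 * β * (1 - β) * (ψ * wd + (1 - ψ) * mF) * (w + v)
          + 2 * β ^ 2 * (ψ * wd + (1 - ψ) * mF) ^ 2
          + σt ^ 2 * (Dt w ^ 2 + Dt v ^ 2)) * fL w * fL v := by
        congr 1
        refine setIntegral_congr_fun measurableSet_Icc fun w _ =>
          setIntegral_congr_fun measurableSet_Icc fun v _ => ?_
        rw [integral_add_mul_sq_add_add_mul_sq_sub_sub hθ₁int hθ₁sq hθ₁mean hθ₂int hθ₂sq hθ₂mean,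
          hθ₁var, hθ₂var]
        ring
    _ = _ := by
        rw [integral_integral_symm_quadratic hfLint h1 h2 hD, hfLmass, hM₁, hM₂]
        field_simp
        ring

/-- evolution of the leaders' second moment in the Boltzmann
description of the controlled leader-leader interaction with `R ≡ 1` and
diffusion. -/
theorem leaders_second_moment_evolution
    (fL : ℝ → ℝ) (hfLmeas : Measurable fL)
    (hfL0 : ∀ w ∈ Icc (-1:ℝ) 1, 0 ≤ fL w)
    (hfLint : IntegrableOn fL (Icc (-1:ℝ) 1))
    (ρ : ℝ) (hρ : 0 < ρ)
    (hfLmass : (∫ w in Icc (-1:ℝ) 1, fL w) = ρ)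
    (mL EL : ℝ)
    (hmL : mL = (1/ρ) * ∫ w in Icc (-1:ℝ) 1, w * fL w)
    (hEL : EL = (1/ρ) * ∫ w in Icc (-1:ℝ) 1, w^2 * fL w)
    (α ν β ψ μ wd mF ηL σt : ℝ)
    (hα : 0 < α) (hν : 0 < ν) (hβ : β = 4*α^2/(ν + 4*α^2))
    (hψ : 0 ≤ ψ) (hμ : 0 ≤ μ) (hψμ : ψ + μ = 1) (hηL : 0 < ηL)
    (Dt : ℝ → ℝ) (hDtmeas : Measurable Dt)
    (hDt : ∀ w ∈ Icc (-1:ℝ) 1, Dt w ∈ Icc (0:ℝ) 1)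
    (Ω : Type*) [MeasureSpace Ω] [IsProbabilityMeasure (volume : Measure Ω)]
    (θ₁ θ₂ : Ω → ℝ)
    (hθ₁meas : Measurable θ₁) (hθ₂meas : Measurable θ₂)
    (hindep : IndepFun θ₁ θ₂)
    (hθ₁int : Integrable θ₁) (hθ₂int : Integrable θ₂)
    (hθ₁sq : Integrable fun ω => (θ₁ ω)^2)
    (hθ₂sq : Integrable fun ω => (θ₂ ω)^2)
    (hθ₁mean : (∫ ω, θ₁ ω) = 0) (hθ₂mean : (∫ ω, θ₂ ω) = 0)
    (hθ₁var : (∫ ω, (θ₁ ω)^2) = σt^2) (hθ₂var : (∫ ω, (θ₂ ω)^2) = σt^2) :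
    (ηL/(2*ρ)) * (∫ w in Icc (-1:ℝ) 1, ∫ v in Icc (-1:ℝ) 1,
        (∫ ω, ((w + α*(v - w) + (-(β/2) * (ψ*(w + v - 2*wd) + μ*(w + v - 2*mF)))
                  + θ₁ ω * Dt w)^2
               + (v + α*(w - v) + (-(β/2) * (ψ*(w + v - 2*wd) + μ*(w + v - 2*mF)))
                  + θ₂ ω * Dt v)^2
               - w^2 - v^2))
          * fL w * fL v)
    = ρ*ηL*(2*α*(α - 1)*(EL - mL^2)
            - (β/2)*(2 - β)*(EL + mL^2)
            + 2*β*(1 - β)*(ψ*wd + μ*mF)*mL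
            + β^2*(ψ*wd + μ*mF)^2)
      + ηL*σt^2*(∫ w in Icc (-1:ℝ) 1, (Dt w)^2 * fL w) :=
  leaders_second_moment_evolution_general fL hfLint ρ hρ hfLmass mL EL hmL hEL α β ψ μ wd mF ηL σt
    hψμ Dt hDtmeas hDt Ω θ₁ θ₂ hθ₁int hθ₂int hθ₁sq hθ₂sq hθ₁mean hθ₂mean hθ₁var hθ₂var
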